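/- Fix an integer k ≥ 2. With Z_k(x) := ∑_{q (k+1)-free, q ≥ 1/x} φ(x,q)·f_k(q)², one has liminf_{x→0⁺} log(Z_k(x))/log(x) ≥ 2 − 1/k. -/

import Mathlib

open Finset Filter Asymptotics ArithmeticFunction Classical

/-- `q` is `k`-free: no `k`-th power of a prime divides `q`. -/
def KFree (k q : ℕ) : Prop := ∀ p : ℕ, p.Prime → ¬ p ^ k ∣ q

/-- The radical (squarefree kernel) of `q`. -/
def rad (q : ℕ) : ℕ := ∏ p ∈ q.primeFactors, p

/-- `f_k(q) = ∏_{p ∣ rad q} 1/(p^k - 1)`. -/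
noncomputable def fk (k q : ℕ) : ℝ := ∏ p ∈ q.primeFactors, 1 / ((p : ℝ) ^ k - 1)

/-- Two-parameter totient `φ(x,q) = #{1 ≤ m ≤ qx : gcd(m,q) = 1}`. -/
noncomputable def phi2 (x : ℝ) (q : ℕ) : ℕ :=
  ((Finset.Icc 1 ⌊(q : ℝ) * x⌋₊).filter fun m => Nat.gcd m q = 1).card


/-- `Z_k(x) = ∑_{q (k+1)-free, q ≥ 1/x} φ(x,q) f_k(q)²`. -/
noncomputable def Z (k : ℕ) (x : ℝ) : ℝ :=
  ∑' q : ℕ, if KFree (k + 1) q ∧ 1 / x ≤ (q : ℝ) then (phi2 x q : ℝ) * (fk k q) ^ 2 else 0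

/-!
Rankin's trick: on the range `q ≥ 1/x` of `Z_k(x)` we have `φ(x,q) ≤ qx ≤ (qx)^β` for `β ≥ 1`, so
`Z_k(x) ≤ x^β ∑_q q^β f_k(q)²`. This series converges for `β < 2 - 1/k`: a `(k+1)`-free `q` satisfies
`q ≤ rad(q)^k` and `f_k(q) ≤ 2^{ω(q)} rad(q)^{-k}`, at most `k^{ω(r)}` such `q` have radical `r`, and
`c^{ω(r)} = O(r^δ)` for every `δ > 0`, so the series is dominated by `∑_r r^{-1-δ}`.
Hence `log Z_k(x) / log x ≥ β + o(1)`. A single prime `p ∈ [1/x, 4/x]` (Bertrand) shows that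
`Z_k(x) ≥ x^{4k}`, which keeps the quotient bounded, so that its `liminf` is meaningful.
-/

open Topology

lemma rad_pos (q : ℕ) : 0 < rad q :=
  Finset.prod_pos fun _ hp => (Nat.prime_of_mem_primeFactors hp).pos

lemma primeFactors_rad (q : ℕ) : (rad q).primeFactors = q.primeFactors :=
  Nat.primeFactors_prod fun _ hp => Nat.prime_of_mem_primeFactors hp

lemma KFree.ne_zero {k q : ℕ} (h : KFree k q) : q ≠ 0 := by
  rintro rfl
  exact h 2 Nat.prime_two (dvd_zero _)

lemma KFree.factorization_le {k q : ℕ} (h : KFree (k + 1) q) (p : ℕ) : q.factorization p ≤ k := by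
  by_cases hp : p.Prime
  · by_contra! hlt
    exact h p hp ((hp.pow_dvd_iff_le_factorization h.ne_zero).2 hlt)
  · simp [Nat.factorization_eq_zero_of_not_prime q hp]

lemma KFree.le_rad_pow {k q : ℕ} (h : KFree (k + 1) q) : q ≤ rad q ^ k := by
  refine Nat.le_of_dvd (pow_pos (rad_pos q) k) ?_
  conv_lhs => rw [← Nat.prod_factorization_pow_eq_self h.ne_zero]
  rw [Finsupp.prod, Nat.support_factorization, rad, ← Finset.prod_pow]
  exact Finset.prod_dvd_prod_of_dvd _ _ fun p _ => pow_dvd_pow p (h.factorization_le p)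

lemma Nat.Prime.kFree {k p : ℕ} (hp : p.Prime) (hk : 2 ≤ k) : KFree k p := by
  intro ℓ hℓ hdvd
  obtain rfl := (Nat.prime_dvd_prime_iff_eq hℓ hp).1 ((dvd_pow_self ℓ (by omega)).trans hdvd)
  have : k ≤ 1 := (Nat.pow_dvd_pow_iff_le_right hℓ.one_lt).1 (by rwa [pow_one])
  omega

/-- A `(k+1)`-free `q` with radical `r` is determined by its exponents `1 ≤ q.factorization p ≤ k`
at the primes `p ∣ r`. -/
lemma card_le_of_forall_kFree_rad_eq {k r : ℕ} (F : Finset ℕ)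
    (hF : ∀ q ∈ F, KFree (k + 1) q ∧ rad q = r) : #F ≤ k ^ #r.primeFactors := by
  have hpf : ∀ q ∈ F, q.primeFactors = r.primeFactors := fun q hq =>
    (hF q hq).2 ▸ (primeFactors_rad q).symm
  calc #F ≤ #(r.primeFactors.pi fun _ => Finset.Icc 1 k) := by
        refine Finset.card_le_card_of_injOn (fun q p _ => q.factorization p) ?_ ?_
        · intro q hq
          simp only [Finset.mem_coe, Finset.mem_pi, Finset.mem_Icc]
          intro p hp
          refine ⟨Nat.one_le_iff_ne_zero.2 ?_, (hF q hq).1.factorization_le p⟩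
          rw [← Finsupp.mem_support_iff, Nat.support_factorization, hpf q hq]
          exact hp
        · intro q hq q' hq' heq
          refine Nat.eq_of_factorization_eq (hF q hq).1.ne_zero (hF q' hq').1.ne_zero fun p => ?_
          by_cases hp : p ∈ r.primeFactors
          · exact congr_fun (congr_fun heq p) hp
          · rw [Finsupp.notMem_support_iff.1 (by rwa [Nat.support_factorization, hpf q hq]),
              Finsupp.notMem_support_iff.1 (by rwa [Nat.support_factorization, hpf q' hq'])]
    _ = k ^ #r.primeFactors := by simp

lemma fk_nonneg (k q : ℕ) : 0 ≤ fk k q :=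
  Finset.prod_nonneg fun p hp => by
    have : (1 : ℝ) ≤ (p : ℝ) ^ k :=
      one_le_pow₀ (by exact_mod_cast (Nat.prime_of_mem_primeFactors hp).one_le)
    have : (0 : ℝ) ≤ (p : ℝ) ^ k - 1 := by linarith
    positivity

lemma fk_le {k : ℕ} (hk : 1 ≤ k) (q : ℕ) : fk k q ≤ 2 ^ #q.primeFactors / (rad q : ℝ) ^ k := by
  rw [fk, rad, Nat.cast_prod, ← Finset.prod_pow, ← Finset.prod_const, ← Finset.prod_div_distrib]
  refine Finset.prod_le_prod (fun p hp => ?_) fun p hp => ?_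
  all_goals
    have h2 : (2 : ℝ) ≤ (p : ℝ) ^ k :=
      (by exact_mod_cast (Nat.prime_of_mem_primeFactors hp).two_le : (2 : ℝ) ≤ p).trans
        (le_self_pow₀ (by exact_mod_cast (Nat.prime_of_mem_primeFactors hp).one_le) (by omega))
  · exact one_div_nonneg.2 (by linarith)
  · rw [div_le_div_iff₀ (by linarith) (by linarith)]
    linarith

lemma KFree.rpow_mul_fk_sq_le {k q : ℕ} (h : KFree (k + 1) q) (hk : 1 ≤ k) {β : ℝ} (hβ : 0 ≤ β) :
    (q : ℝ) ^ β * fk k q ^ 2 ≤ 4 ^ #q.primeFactors * (rad q : ℝ) ^ (k * β - 2 * k) := by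
  have hr : (0 : ℝ) < rad q := by exact_mod_cast rad_pos q
  have hq : (q : ℝ) ^ β ≤ (rad q : ℝ) ^ (k * β) := by
    rw [Real.rpow_mul hr.le, Real.rpow_natCast]
    exact Real.rpow_le_rpow (by positivity) (by exact_mod_cast h.le_rad_pow) hβ
  have hfk : fk k q ^ 2 ≤ (2 ^ #q.primeFactors / (rad q : ℝ) ^ k) ^ 2 :=
    pow_le_pow_left₀ (fk_nonneg k q) (fk_le hk q) 2
  calc (q : ℝ) ^ β * fk k q ^ 2
      ≤ (rad q : ℝ) ^ (k * β) * (2 ^ #q.primeFactors / (rad q : ℝ) ^ k) ^ 2 := by gcongr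
    _ = 4 ^ #q.primeFactors * (rad q : ℝ) ^ (k * β - 2 * k) := by
      rw [Real.rpow_sub hr, show (2 : ℝ) * k = ((2 * k : ℕ) : ℝ) by push_cast; ring,
        Real.rpow_natCast, show (4 : ℝ) = 2 ^ 2 by norm_num, ← pow_mul]
      ring

lemma sum_rpow_mul_fk_sq_le_of_forall_rad_eq {k r : ℕ} (hk : 1 ≤ k) {β : ℝ} (hβ : 0 ≤ β)
    (G : Finset ℕ) (hG : ∀ q ∈ G, KFree (k + 1) q ∧ rad q = r) :
    ∑ q ∈ G, (q : ℝ) ^ β * fk k q ^ 2 ≤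
      ((4 * k : ℕ) : ℝ) ^ #r.primeFactors * (r : ℝ) ^ (k * β - 2 * k) := by
  calc ∑ q ∈ G, (q : ℝ) ^ β * fk k q ^ 2
      ≤ ∑ _q ∈ G, 4 ^ #r.primeFactors * (r : ℝ) ^ (k * β - 2 * k) :=
        Finset.sum_le_sum fun q hq => by
          obtain ⟨hq, rfl⟩ := hG q hq
          rw [primeFactors_rad]
          exact hq.rpow_mul_fk_sq_le hk hβ
    _ = #G * (4 ^ #r.primeFactors * (r : ℝ) ^ (k * β - 2 * k)) := by
        rw [Finset.sum_const, nsmul_eq_mul]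
    _ ≤ k ^ #r.primeFactors * (4 ^ #r.primeFactors * (r : ℝ) ^ (k * β - 2 * k)) := by
        gcongr
        exact_mod_cast card_le_of_forall_kFree_rad_eq G hG
    _ = ((4 * k : ℕ) : ℝ) ^ #r.primeFactors * (r : ℝ) ^ (k * β - 2 * k) := by
        push_cast
        ring

/-- Primes `p ≤ B := ⌈c^{1/δ}⌉` contribute at most `c^B`, each larger prime contributes `c ≤ p^δ`. -/
lemma exists_pow_card_primeFactors_le {c δ : ℝ} (hc : 1 ≤ c) (hδ : 0 < δ) :
    ∃ A : ℝ, ∀ r : ℕ, r ≠ 0 → c ^ #r.primeFactors ≤ A * (r : ℝ) ^ δ := by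
  set B := ⌈c ^ δ⁻¹⌉₊
  refine ⟨c ^ B, fun r hr => ?_⟩
  have hsmall : #(r.primeFactors.filter (· ≤ B)) ≤ B := by
    calc #(r.primeFactors.filter (· ≤ B)) ≤ #(Finset.Icc 1 B) :=
          Finset.card_le_card fun p hp => by
            simp only [Finset.mem_filter, Nat.mem_primeFactors, Finset.mem_Icc] at hp ⊢
            exact ⟨hp.1.1.one_le, hp.2⟩
      _ = B := by simp
  have hlarge : c ^ #(r.primeFactors.filter (¬ · ≤ B)) ≤ (r : ℝ) ^ δ := by
    have hc_le : ∀ p ∈ r.primeFactors.filter (¬ · ≤ B), c ≤ (p : ℝ) ^ δ := fun p hp => by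
      have hBp : c ^ δ⁻¹ ≤ p :=
        (Nat.le_ceil _).trans (by exact_mod_cast (not_le.1 (Finset.mem_filter.1 hp).2).le)
      calc c = (c ^ δ⁻¹) ^ δ := (Real.rpow_inv_rpow (by linarith) hδ.ne').symm
        _ ≤ (p : ℝ) ^ δ := Real.rpow_le_rpow (by positivity) hBp hδ.le
    have hdvd : ∏ p ∈ r.primeFactors.filter (¬ · ≤ B), p ∣ r :=
      (Finset.prod_dvd_prod_of_subset _ _ _ (Finset.filter_subset _ _)).trans
        (Nat.prod_primeFactors_dvd r)
    calc c ^ #(r.primeFactors.filter (¬ · ≤ B))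
        = ∏ _p ∈ r.primeFactors.filter (¬ · ≤ B), c := (Finset.prod_const c).symm
      _ ≤ ∏ p ∈ r.primeFactors.filter (¬ · ≤ B), (p : ℝ) ^ δ :=
          Finset.prod_le_prod (fun _ _ => by positivity) hc_le
      _ = (∏ p ∈ r.primeFactors.filter (¬ · ≤ B), (p : ℝ)) ^ δ :=
          Real.finsetProd_rpow _ _ (fun _ _ => by positivity) δ
      _ ≤ (r : ℝ) ^ δ := by
          gcongr
          rw [← Nat.cast_prod]
          exact Nat.cast_le.2 (Nat.le_of_dvd (Nat.pos_of_ne_zero hr) hdvd)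
  calc c ^ #r.primeFactors
      = c ^ #(r.primeFactors.filter (· ≤ B)) * c ^ #(r.primeFactors.filter (¬ · ≤ B)) := by
        rw [← pow_add, Finset.card_filter_add_card_filter_not]
    _ ≤ c ^ B * (r : ℝ) ^ δ :=
        mul_le_mul (pow_le_pow_right₀ hc hsmall) hlarge (by positivity) (by positivity)

noncomputable def rankinTerm (k : ℕ) (β : ℝ) (q : ℕ) : ℝ :=
  if KFree (k + 1) q then (q : ℝ) ^ β * fk k q ^ 2 else 0

lemma rankinTerm_nonneg (k : ℕ) (β : ℝ) (q : ℕ) : 0 ≤ rankinTerm k β q := by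
  unfold rankinTerm
  split_ifs
  · exact mul_nonneg (by positivity) (sq_nonneg _)
  · exact le_rfl

lemma summable_rankinTerm {k : ℕ} (hk : 1 ≤ k) {β : ℝ} (hβ0 : 0 ≤ β) (hβ : β < 2 - 1 / k) :
    Summable (rankinTerm k β) := by
  have hk' : (0 : ℝ) < k := by exact_mod_cast hk
  set δ := (k * (2 - β) - 1) / 2 with hδ
  have hδ0 : 0 < δ := by
    have : 1 < k * (2 - β) := by
      rw [lt_sub_iff_add_lt, ← lt_sub_iff_add_lt', div_lt_iff₀ hk'] at hβ
      linarith
    linarith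
  have hexp : δ + (k * β - 2 * k) = -(1 + δ) := by rw [hδ]; ring
  obtain ⟨A, hA⟩ := exists_pow_card_primeFactors_le (c := ((4 * k : ℕ) : ℝ))
    (by exact_mod_cast (by omega : 1 ≤ 4 * k)) hδ0
  have hA0 : 0 ≤ A := by simpa using (hA 1 one_ne_zero).trans' (by positivity)
  refine summable_of_sum_le (c := A * ∑' r : ℕ, (r : ℝ) ^ (-(1 + δ)))
    (rankinTerm_nonneg k β) fun F => ?_
  set F' := F.filter (KFree (k + 1))
  have hfiber : ∀ r ∈ F'.image rad,
      ∑ q ∈ F'.filter (rad · = r), (q : ℝ) ^ β * fk k q ^ 2 ≤ A * (r : ℝ) ^ (-(1 + δ)) := by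
    intro r hr
    obtain ⟨q₀, -, rfl⟩ := Finset.mem_image.1 hr
    have hr0 : (0 : ℝ) < rad q₀ := by exact_mod_cast rad_pos q₀
    calc ∑ q ∈ F'.filter (rad · = rad q₀), (q : ℝ) ^ β * fk k q ^ 2
        ≤ ((4 * k : ℕ) : ℝ) ^ #(rad q₀).primeFactors * (rad q₀ : ℝ) ^ (k * β - 2 * k) :=
          sum_rpow_mul_fk_sq_le_of_forall_rad_eq hk hβ0 _ fun q hq => by
            simp only [F', Finset.mem_filter] at hq
            exact ⟨hq.1.2, hq.2⟩
      _ ≤ A * (rad q₀ : ℝ) ^ δ * (rad q₀ : ℝ) ^ (k * β - 2 * k) := by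
          gcongr
          exact hA _ (rad_pos q₀).ne'
      _ = A * (rad q₀ : ℝ) ^ (-(1 + δ)) := by
          rw [mul_assoc, ← Real.rpow_add hr0, hexp]
  have hζ : Summable fun r : ℕ => (r : ℝ) ^ (-(1 + δ)) :=
    Real.summable_nat_rpow.2 (by linarith)
  calc ∑ q ∈ F, rankinTerm k β q = ∑ q ∈ F', (q : ℝ) ^ β * fk k q ^ 2 := by
        rw [Finset.sum_filter]
        rfl
    _ = ∑ r ∈ F'.image rad, ∑ q ∈ F'.filter (rad · = r), (q : ℝ) ^ β * fk k q ^ 2 :=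
        (Finset.sum_fiberwise_of_maps_to (fun q hq => Finset.mem_image_of_mem rad hq) _).symm
    _ ≤ ∑ r ∈ F'.image rad, A * (r : ℝ) ^ (-(1 + δ)) := Finset.sum_le_sum hfiber
    _ ≤ A * ∑' r : ℕ, (r : ℝ) ^ (-(1 + δ)) := by
        rw [← tsum_mul_left]
        exact (hζ.mul_left A).sum_le_tsum _ fun r _ => by positivity

lemma phi2_le {x : ℝ} (hx : 0 ≤ x) (q : ℕ) : (phi2 x q : ℝ) ≤ q * x :=
  calc (phi2 x q : ℝ) ≤ ⌊(q : ℝ) * x⌋₊ := by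
        exact_mod_cast (Finset.card_filter_le _ _).trans (by simp)
    _ ≤ q * x := Nat.floor_le (by positivity)

lemma phi2_pos {x : ℝ} {q : ℕ} (h : 1 ≤ (q : ℝ) * x) : 0 < phi2 x q :=
  Finset.card_pos.2 ⟨1, Finset.mem_filter.2
    ⟨Finset.mem_Icc.2 ⟨le_rfl, Nat.le_floor (by exact_mod_cast h)⟩, Nat.gcd_one_left q⟩⟩

noncomputable def zTerm (k : ℕ) (x : ℝ) (q : ℕ) : ℝ :=
  if KFree (k + 1) q ∧ 1 / x ≤ (q : ℝ) then (phi2 x q : ℝ) * (fk k q) ^ 2 else 0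

lemma Z_eq_tsum_zTerm (k : ℕ) (x : ℝ) : Z k x = ∑' q, zTerm k x q := rfl

lemma zTerm_nonneg (k : ℕ) (x : ℝ) (q : ℕ) : 0 ≤ zTerm k x q := by
  unfold zTerm
  split_ifs
  · positivity
  · exact le_rfl

lemma Z_nonneg (k : ℕ) (x : ℝ) : 0 ≤ Z k x :=
  tsum_nonneg (zTerm_nonneg k x)

lemma zTerm_le_rpow_mul_rankinTerm {k : ℕ} {x β : ℝ} (hx : 0 < x) (hβ : 1 ≤ β) (q : ℕ) :
    zTerm k x q ≤ x ^ β * rankinTerm k β q := by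
  unfold zTerm
  by_cases hq : KFree (k + 1) q ∧ 1 / x ≤ q
  · rw [if_pos hq, rankinTerm, if_pos hq.1]
    have hqx : 1 ≤ (q : ℝ) * x := (div_le_iff₀ hx).1 hq.2
    calc (phi2 x q : ℝ) * fk k q ^ 2 ≤ ((q : ℝ) * x) ^ β * fk k q ^ 2 := by
          gcongr
          exact (phi2_le hx.le q).trans (Real.self_le_rpow_of_one_le hqx hβ)
      _ = x ^ β * ((q : ℝ) ^ β * fk k q ^ 2) := by
          rw [Real.mul_rpow (by positivity) hx.le]
          ring
  · rw [if_neg hq]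
    exact mul_nonneg (by positivity) (rankinTerm_nonneg k β q)

lemma summable_zTerm {k : ℕ} (hk : 1 ≤ k) {x β : ℝ} (hx : 0 < x) (hβ1 : 1 ≤ β)
    (hβ : β < 2 - 1 / k) : Summable (zTerm k x) :=
  Summable.of_nonneg_of_le (zTerm_nonneg k x) (zTerm_le_rpow_mul_rankinTerm hx hβ1)
    ((summable_rankinTerm hk (by linarith) hβ).mul_left _)

lemma Z_le_tsum_rankinTerm_mul_rpow {k : ℕ} (hk : 1 ≤ k) {x β : ℝ} (hx : 0 < x) (hβ1 : 1 ≤ β)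
    (hβ : β < 2 - 1 / k) : Z k x ≤ (∑' q, rankinTerm k β q) * x ^ β := by
  rw [Z_eq_tsum_zTerm, mul_comm, ← tsum_mul_left]
  exact (summable_zTerm hk hx hβ1 hβ).tsum_le_tsum (zTerm_le_rpow_mul_rankinTerm hx hβ1)
    ((summable_rankinTerm hk (by linarith) hβ).mul_left _)

lemma one_lt_two_sub_inv {k : ℕ} (hk : 2 ≤ k) : 1 < 2 - 1 / (k : ℝ) := by
  have : 1 / (k : ℝ) ≤ 1 / 2 := one_div_le_one_div_of_le (by norm_num) (by exact_mod_cast hk)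
  linarith

lemma Z_isBigO_rpow {k : ℕ} (hk : 2 ≤ k) {β : ℝ} (hβ : β < 2 - 1 / k) :
    Z k =O[𝓝[>] 0] fun x => x ^ β := by
  set γ := max β 1
  have hγ : γ < 2 - 1 / k := max_lt hβ (one_lt_two_sub_inv hk)
  refine IsBigO.of_bound (∑' q, rankinTerm k γ q) ?_
  filter_upwards [Ioo_mem_nhdsGT zero_lt_one] with x ⟨hx0, hx1⟩
  rw [Real.norm_of_nonneg (Z_nonneg k x),
    Real.norm_of_nonneg (by positivity)]
  calc Z k x ≤ (∑' q, rankinTerm k γ q) * x ^ γ :=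
        Z_le_tsum_rankinTerm_mul_rpow (by omega) hx0 (le_max_right _ _) hγ
    _ ≤ (∑' q, rankinTerm k γ q) * x ^ β :=
        mul_le_mul_of_nonneg_left (Real.rpow_le_rpow_of_exponent_ge hx0 hx1.le (le_max_left _ _))
          (tsum_nonneg (rankinTerm_nonneg k γ))

lemma pow_le_Z {k : ℕ} (hk : 2 ≤ k) {x : ℝ} (hx0 : 0 < x) (hx : x ≤ 1 / 4) :
    x ^ (4 * k) ≤ Z k x := by
  obtain ⟨p, hp, hxp, hp2⟩ := Nat.exists_prime_lt_and_le_two_mul ⌈1 / x⌉₊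
    (Nat.ceil_pos.2 (by positivity)).ne'
  have hpx : 1 ≤ (p : ℝ) * x := by
    rw [← div_le_iff₀ hx0]
    exact (Nat.le_ceil _).trans (by exact_mod_cast hxp.le)
  have hpx4 : (p : ℝ) * x ≤ 4 := by
    have : (p : ℝ) < 2 * (1 / x + 1) :=
      (by exact_mod_cast hp2 : (p : ℝ) ≤ 2 * ⌈1 / x⌉₊).trans_lt
        (by gcongr; exact Nat.ceil_lt_add_one (by positivity))
    calc (p : ℝ) * x ≤ 2 * (1 / x + 1) * x := by gcongr
      _ = 2 + 2 * x := by field_simp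
      _ ≤ 4 := by linarith
  have hpk : (1 : ℝ) < (p : ℝ) ^ k := one_lt_pow₀ (by exact_mod_cast hp.one_lt) (by omega)
  have hfk : 1 / (p : ℝ) ^ k ≤ fk k p := by
    rw [fk, hp.primeFactors, Finset.prod_singleton]
    exact one_div_le_one_div_of_le (by linarith) (by linarith)
  have hx2 : x ^ 2 ≤ 1 / p := by
    rw [le_div_iff₀ (by exact_mod_cast hp.pos)]
    nlinarith
  calc x ^ (4 * k) = ((x ^ 2) ^ k) ^ 2 := by ring
    _ ≤ ((1 / (p : ℝ)) ^ k) ^ 2 := by gcongr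
    _ ≤ fk k p ^ 2 := by
        rw [one_div_pow]
        gcongr
    _ ≤ zTerm k x p := by
        rw [zTerm, if_pos ⟨hp.kFree (by omega), (div_le_iff₀ hx0).2 hpx⟩]
        exact le_mul_of_one_le_left (sq_nonneg _) (by exact_mod_cast phi2_pos hpx)
    _ ≤ Z k x :=
        (summable_zTerm (by omega) hx0 le_rfl (one_lt_two_sub_inv hk)).le_tsum p
          fun q _ => zTerm_nonneg k x q

theorem le_liminf_log_div_log {f : ℝ → ℝ} {b : ℝ} {N : ℕ}
    (hupper : ∀ β < b, f =O[𝓝[>] 0] fun x => x ^ β) (hlower : ∀ᶠ x in 𝓝[>] 0, x ^ N ≤ f x) :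
    b ≤ liminf (fun x => Real.log (f x) / Real.log x) (𝓝[>] 0) := by
  have hlog : ∀ᶠ x in 𝓝[>] (0 : ℝ), 0 < x ∧ Real.log x < 0 := by
    filter_upwards [Ioo_mem_nhdsGT zero_lt_one] with x hx using ⟨hx.1, Real.log_neg hx.1 hx.2⟩
  have hcob : IsCoboundedUnder (· ≥ ·) (𝓝[>] 0) fun x => Real.log (f x) / Real.log x := by
    refine isCoboundedUnder_ge_of_eventually_le _ (x := (N : ℝ)) ?_
    filter_upwards [hlog, hlower] with x ⟨hx0, hlx⟩ hfx
    rw [div_le_iff_of_neg hlx, ← Real.log_pow]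
    exact Real.log_le_log (by positivity) hfx
  refine le_of_forall_lt_imp_le_of_dense fun c hc => le_liminf_of_le hcob ?_
  obtain ⟨β, hcβ, hβb⟩ := exists_between hc
  obtain ⟨C, hC, hfC⟩ := (hupper β hβb).exists_pos
  have hsmall : Tendsto (fun x => Real.log C / Real.log x) (𝓝[>] 0) (𝓝 0) :=
    tendsto_const_nhds.div_atBot Real.tendsto_log_nhdsGT_zero
  filter_upwards [hlog, hlower, hfC.bound, hsmall.eventually (lt_mem_nhds (by linarith : c - β < 0))]
    with x ⟨hx0, hlx⟩ hfx hfxC hCx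
  have hfx0 : 0 < f x := (pow_pos hx0 N).trans_le hfx
  rw [Real.norm_of_nonneg hfx0.le, Real.norm_of_nonneg (by positivity)] at hfxC
  have hlogf : Real.log (f x) ≤ Real.log C + β * Real.log x := by
    rw [← Real.log_rpow hx0, ← Real.log_mul hC.ne' (by positivity)]
    exact Real.log_le_log (by positivity) hfxC
  rw [lt_div_iff_of_neg hlx] at hCx
  rw [le_div_iff_of_neg hlx]
  linarith

theorem stmt17 (k : ℕ) (hk : 2 ≤ k) :
    2 - 1 / (k : ℝ) ≤
      Filter.liminf (fun x : ℝ => Real.log (Z k x) / Real.log x) (nhdsWithin 0 (Set.Ioi 0)) := by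
  refine le_liminf_log_div_log (N := 4 * k) (fun β hβ => Z_isBigO_rpow hk hβ) ?_
  filter_upwards [Ioc_mem_nhdsGT (by norm_num : (0 : ℝ) < 1 / 4)] with x hx
  exact pow_le_Z hk hx.1 hx.2
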